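/- arXiv:2209.05616 — 2 statements merged into one kernel-verified Lean document; each statement's English description precedes it below -/
import Mathlib

section
/- Let N ≥ 2, n, m ≥ 1, let A = {a₀,…,a_{n−1}} ⊂ ℤ, and for each s let B_s ⊂ ℤ with #B_s = m. Suppose L = L₁ ⊕ L₂ ⊂ ℤ is such that (N, A ⊕ B_s, L) is a Hadamard triple for every s = 0,…,n−1. Let Q₀,…,Q_{n−1} : ℝ → ℂ be functions periodic with period 1, and define 𝐌(ξ) = (1/n)∑_{s=0}^{n−1} e^{−2πi a_s ξ / N} Q_s(ξ). Then for all ξ ∈ ℝ and each fixed s, ∑_{ℓ∈L} |𝐌(ξ+ℓ)|² · |M_{B_s/N}(ξ+ℓ)|² = (1/n)∑_{s=0}^{n−1} |Q_s(ξ)|². -/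
/-- The mask function `M_A(x) = (1/#A) ∑_{a∈A} e^{-2πi a x}`. -/
noncomputable def mask (A : Finset ℤ) (x : ℝ) : ℂ :=
  (A.card : ℂ)⁻¹ * ∑ a ∈ A, Complex.exp ((-(2 * Real.pi * (a : ℝ) * x) : ℝ) * Complex.I)

/-- `(N, D, L)` is a Hadamard triple, in its analytic form:
`#D = #L` and `∑_{ℓ∈L} |M_{D/N}(ξ+ℓ)|² = 1` for all `ξ`. -/
def IsHadamardTriple (N : ℤ) (D L : Finset ℤ) : Prop :=
  D.card = L.card ∧
  ∀ ξ : ℝ, ∑ l ∈ L, ‖mask D ((ξ + (l : ℝ)) / (N : ℝ))‖ ^ 2 = 1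

/-- The sumset `A + B`. -/
noncomputable def sumset (A B : Finset ℤ) : Finset ℤ :=
  (A ×ˢ B).image fun p => p.1 + p.2

noncomputable def ee (r : ℝ) : ℂ := Complex.exp ((r:ℂ) * Complex.I)


lemma ee_add (r s : ℝ) : ee (r + s) = ee r * ee s := by
  simp [ee, ← Complex.exp_add]; ring_nf

lemma conj_ee (r : ℝ) : (starRingEnd ℂ) (ee r) = ee (-r) := by
  rw [ee, ← Complex.exp_conj]; congr 1; simp

lemma ee_zero : ee 0 = 1 := by simp [ee]

lemma normsq_c (z : ℂ) : ((‖z‖^2 : ℝ) : ℂ) = z * (starRingEnd ℂ) z := by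
  rw [Complex.mul_conj]; norm_cast
  rw [Complex.normSq_eq_norm_sq]

lemma mask_eq (D : Finset ℤ) (x : ℝ) :
    mask D x = (D.card : ℂ)⁻¹ * ∑ d ∈ D, ee (-(2 * Real.pi * (d:ℝ) * x)) := rfl

lemma mask_mul_conj (D : Finset ℤ) (x : ℝ) :
    mask D x * (starRingEnd ℂ) (mask D x)
      = ((D.card:ℂ)⁻¹)^2 * ∑ p ∈ D ×ˢ D, ee (-(2*Real.pi*((p.1:ℝ)-(p.2:ℝ))*x)) := by
  rw [mask_eq, map_mul, map_sum, map_inv₀, Complex.conj_natCast, mul_mul_mul_comm,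
    Finset.sum_mul_sum, ← sq]
  congr 1
  rw [Finset.sum_product]
  refine Finset.sum_congr rfl fun d _ => Finset.sum_congr rfl fun d' _ => ?_
  rw [conj_ee, ← ee_add]
  congr 1
  ring

lemma int_ee (T c : ℝ) (hc : c ≠ 0) :
    ∫ x in (0:ℝ)..T, ee (c * x) = (ee (c * T) - 1) / ((c:ℂ) * Complex.I) := by
  have h : ∀ x : ℝ, ee (c * x) = Complex.exp (((c:ℂ) * Complex.I) * (x:ℂ)) := by
    intro x; unfold ee; push_cast; ring_nf
  simp only [h]
  rw [integral_exp_mul_complex (by simp [hc, Complex.I_ne_zero])]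
  rw [← h T]; norm_num

lemma int_ee_twopi (T : ℝ) (hT : T ≠ 0) (k : ℤ) :
    ∫ x in (0:ℝ)..T, ee (2 * Real.pi * (k:ℝ) / T * x) = if k = 0 then (T:ℂ) else 0 := by
  rcases eq_or_ne k 0 with hk | hk
  · simp [hk, ee]
  · have hkR : (k:ℝ) ≠ 0 := Int.cast_ne_zero.mpr hk
    have hc : 2 * Real.pi * (k:ℝ) / T ≠ 0 := by
      apply div_ne_zero _ hT
      have := Real.pi_ne_zero
      positivity
    rw [if_neg hk, int_ee T _ hc]
    have : ee (2 * Real.pi * (k:ℝ) / T * T) = 1 := by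
      rw [show 2 * Real.pi * (k:ℝ) / T * T = 2 * Real.pi * k by field_simp]
      unfold ee
      rw [show ((2 * Real.pi * (k:ℝ) : ℝ) : ℂ) * Complex.I
            = (k:ℂ) * (2 * (Real.pi:ℂ) * Complex.I) by push_cast; ring]
      exact Complex.exp_int_mul_two_pi_mul_I k
    rw [this]; simp

lemma orth (N : ℤ) (hN : (N:ℝ) ≠ 0) (D L : Finset ℤ)
    (hHad : ∀ ξ : ℝ, ∑ l ∈ L, ‖mask D ((ξ + (l : ℝ)) / (N : ℝ))‖ ^ 2 = 1)
    (k₀ : ℤ) (hk0 : k₀ ≠ 0) (d₁ d₂ : ℤ) (hd₁ : d₁ ∈ D) (hd₂ : d₂ ∈ D)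
    (hdd : d₁ - d₂ = k₀) :
    ∑ l ∈ L, ee (-(2 * Real.pi * (k₀:ℝ) * (l:ℝ) / (N:ℝ))) = 0 := by
  have hDne : (D.card : ℂ) ≠ 0 := by
    simp [Finset.card_ne_zero_of_mem hd₁]
  -- Step 1: complex form of the Hadamard identity
  have h1 : ∀ ξ : ℝ, ∑ l ∈ L, ∑ p ∈ D ×ˢ D,
      ee (-(2*Real.pi*((p.1:ℝ)-(p.2:ℝ))*((ξ+(l:ℝ))/(N:ℝ)))) = (D.card:ℂ)^2 := by
    intro ξ
    have hc : ∑ l ∈ L, ((‖mask D ((ξ + (l:ℝ)) / (N:ℝ))‖^2 : ℝ) : ℂ) = 1 := by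
      rw [← Complex.ofReal_sum]
      exact_mod_cast hHad ξ
    simp only [normsq_c, mask_mul_conj] at hc
    rw [← Finset.mul_sum] at hc
    have h2 : (D.card:ℂ)^2 * (((D.card:ℂ)⁻¹)^2 *
        ∑ l ∈ L, ∑ p ∈ D ×ˢ D, ee (-(2*Real.pi*((p.1:ℝ)-(p.2:ℝ))*((ξ+(l:ℝ))/(N:ℝ))))) = (D.card:ℂ)^2 * 1 := by
      rw [hc]
    rw [mul_one, ← mul_assoc, ← mul_pow, mul_inv_cancel₀ hDne, one_pow, one_mul] at h2
    exact h2
  -- Step 2: termwise integrals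
  have hterm : ∀ (l : ℤ) (p : ℤ × ℤ),
      (∫ ξ in (0:ℝ)..(N:ℝ), ee (2*Real.pi*(k₀:ℝ)*ξ/(N:ℝ)) *
          ee (-(2*Real.pi*((p.1:ℝ)-(p.2:ℝ))*((ξ+(l:ℝ))/(N:ℝ)))))
        = if p.1 - p.2 = k₀ then (((N:ℝ)):ℂ) * ee (-(2*Real.pi*(k₀:ℝ)*(l:ℝ)/(N:ℝ))) else 0 := by
    intro l p
    have hsplit : ∀ ξ : ℝ, ee (2*Real.pi*(k₀:ℝ)*ξ/(N:ℝ)) *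
        ee (-(2*Real.pi*((p.1:ℝ)-(p.2:ℝ))*((ξ+(l:ℝ))/(N:ℝ))))
        = ee (2*Real.pi*(((k₀ - (p.1 - p.2) : ℤ)):ℝ)/(N:ℝ) * ξ) *
          ee (-(2*Real.pi*(((p.1 - p.2 : ℤ)):ℝ)*(l:ℝ)/(N:ℝ))) := by
      intro ξ
      rw [← ee_add, ← ee_add]
      congr 1
      push_cast
      ring
    simp only [hsplit]
    rw [intervalIntegral.integral_mul_const, int_ee_twopi (N:ℝ) hN (k₀ - (p.1 - p.2))]
    rcases eq_or_ne (p.1 - p.2) k₀ with h | h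
    · rw [if_pos (by omega), if_pos h, h]
    · rw [if_neg (by omega), if_neg h, zero_mul]
  -- continuity
  have hcont : ∀ (l : ℤ) (p : ℤ × ℤ), Continuous (fun ξ : ℝ =>
      ee (2*Real.pi*(k₀:ℝ)*ξ/(N:ℝ)) *
        ee (-(2*Real.pi*((p.1:ℝ)-(p.2:ℝ))*((ξ+(l:ℝ))/(N:ℝ))))) := by
    intro l p; unfold ee; fun_prop
  -- swap integral and sums
  have h3 : (∫ ξ in (0:ℝ)..(N:ℝ), ∑ l ∈ L, ∑ p ∈ D ×ˢ D,
        ee (2*Real.pi*(k₀:ℝ)*ξ/(N:ℝ)) *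
          ee (-(2*Real.pi*((p.1:ℝ)-(p.2:ℝ))*((ξ+(l:ℝ))/(N:ℝ)))))
      = ∑ l ∈ L, ∑ p ∈ D ×ˢ D,
        ∫ ξ in (0:ℝ)..(N:ℝ), ee (2*Real.pi*(k₀:ℝ)*ξ/(N:ℝ)) *
          ee (-(2*Real.pi*((p.1:ℝ)-(p.2:ℝ))*((ξ+(l:ℝ))/(N:ℝ)))) := by
    rw [intervalIntegral.integral_finset_sum]
    · exact Finset.sum_congr rfl fun l _ =>
        intervalIntegral.integral_finset_sum
          (fun p _ => ((hcont l p).intervalIntegrable _ _))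
    · intro l _
      exact (continuous_finset_sum _ fun p _ => hcont l p).intervalIntegrable _ _
  -- the integral of the multiplier times the constant is zero
  have h4 : (∫ ξ in (0:ℝ)..(N:ℝ), ee (2*Real.pi*(k₀:ℝ)*ξ/(N:ℝ)) * (D.card:ℂ)^2) = 0 := by
    rw [intervalIntegral.integral_mul_const]
    have harg : ∀ ξ : ℝ, ee (2*Real.pi*(k₀:ℝ)*ξ/(N:ℝ)) = ee (2*Real.pi*(k₀:ℝ)/(N:ℝ) * ξ) := by
      intro ξ; congr 1; ring
    simp only [harg]
    rw [int_ee_twopi (N:ℝ) hN k₀, if_neg hk0, zero_mul]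
  -- combine
  have h5 : ∑ l ∈ L, ∑ p ∈ D ×ˢ D,
      (if p.1 - p.2 = k₀ then (((N:ℝ)):ℂ) * ee (-(2*Real.pi*(k₀:ℝ)*(l:ℝ)/(N:ℝ))) else 0) = 0 := by
    have heq : (fun ξ : ℝ => ∑ l ∈ L, ∑ p ∈ D ×ˢ D,
        ee (2*Real.pi*(k₀:ℝ)*ξ/(N:ℝ)) *
          ee (-(2*Real.pi*((p.1:ℝ)-(p.2:ℝ))*((ξ+(l:ℝ))/(N:ℝ)))))
        = fun ξ : ℝ => ee (2*Real.pi*(k₀:ℝ)*ξ/(N:ℝ)) * (D.card:ℂ)^2 := by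
      funext ξ
      rw [← h1 ξ]
      simp only [Finset.mul_sum]
    calc ∑ l ∈ L, ∑ p ∈ D ×ˢ D,
          (if p.1 - p.2 = k₀ then (((N:ℝ)):ℂ) * ee (-(2*Real.pi*(k₀:ℝ)*(l:ℝ)/(N:ℝ))) else 0)
        = ∑ l ∈ L, ∑ p ∈ D ×ˢ D,
            ∫ ξ in (0:ℝ)..(N:ℝ), ee (2*Real.pi*(k₀:ℝ)*ξ/(N:ℝ)) *
              ee (-(2*Real.pi*((p.1:ℝ)-(p.2:ℝ))*((ξ+(l:ℝ))/(N:ℝ)))) := by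
          exact Finset.sum_congr rfl fun l _ => Finset.sum_congr rfl fun p _ => (hterm l p).symm
      _ = ∫ ξ in (0:ℝ)..(N:ℝ), ∑ l ∈ L, ∑ p ∈ D ×ˢ D,
            ee (2*Real.pi*(k₀:ℝ)*ξ/(N:ℝ)) *
              ee (-(2*Real.pi*((p.1:ℝ)-(p.2:ℝ))*((ξ+(l:ℝ))/(N:ℝ)))) := h3.symm
      _ = ∫ ξ in (0:ℝ)..(N:ℝ), ee (2*Real.pi*(k₀:ℝ)*ξ/(N:ℝ)) * (D.card:ℂ)^2 := by
          rw [heq]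
      _ = 0 := h4
  -- extract the conclusion
  set F := (D ×ˢ D).filter (fun p => p.1 - p.2 = k₀) with hF
  have hFne : F.Nonempty := ⟨(d₁, d₂), by
    simp [hF, Finset.mem_filter, Finset.mem_product, hd₁, hd₂, hdd]⟩
  have h7 : ∑ l ∈ L, ∑ p ∈ D ×ˢ D,
      (if p.1 - p.2 = k₀ then (((N:ℝ)):ℂ) * ee (-(2*Real.pi*(k₀:ℝ)*(l:ℝ)/(N:ℝ))) else 0)
      = (F.card : ℂ) * ((((N:ℝ)):ℂ) * ∑ l ∈ L, ee (-(2*Real.pi*(k₀:ℝ)*(l:ℝ)/(N:ℝ)))) := by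
    have hinner : ∀ l : ℤ, ∑ p ∈ D ×ˢ D,
        (if p.1 - p.2 = k₀ then (((N:ℝ)):ℂ) * ee (-(2*Real.pi*(k₀:ℝ)*(l:ℝ)/(N:ℝ))) else 0)
        = (F.card : ℂ) * ((((N:ℝ)):ℂ) * ee (-(2*Real.pi*(k₀:ℝ)*(l:ℝ)/(N:ℝ)))) := by
      intro l
      rw [← Finset.sum_filter, ← hF, Finset.sum_const, nsmul_eq_mul]
    simp only [hinner]
    rw [← Finset.mul_sum, ← Finset.mul_sum]
  rw [h7] at h5
  have h6 := h5
  have hFc : (F.card : ℂ) ≠ 0 := by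
    simp [Finset.card_ne_zero.mpr hFne]
  have hNc : ((N:ℝ):ℂ) ≠ 0 := by exact_mod_cast hN
  rcases mul_eq_zero.mp h6 with h | h
  · exact absurd h hFc
  rcases mul_eq_zero.mp h with h | h
  · exact absurd h hNc
  · exact h


lemma ee_def (r : ℝ) : Complex.exp ((r:ℂ) * Complex.I) = ee r := rfl

lemma normsq_c' (z : ℂ) : ((‖z‖ : ℂ))^2 = z * (starRingEnd ℂ) z := by
  rw [← normsq_c]; push_cast; ring

lemma ee_mul (r s : ℝ) : ee r * ee s = ee (r + s) := (ee_add r s).symm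

theorem stmt_3 (N : ℤ) (hN : 2 ≤ N) (n m : ℕ) (hn : 1 ≤ n) (hm : 1 ≤ m)
    (a : Fin n → ℤ) (ha : Function.Injective a)
    (B : Fin n → Finset ℤ) (hBcard : ∀ s, (B s).card = m)
    (L L₁ L₂ : Finset ℤ)
    (hL : L = sumset L₁ L₂) (hLdirect : L.card = L₁.card * L₂.card)
    (hdirect : ∀ s : Fin n, (sumset (Finset.univ.image a) (B s)).card = n * m)
    (hHad : ∀ s : Fin n, IsHadamardTriple N (sumset (Finset.univ.image a) (B s)) L)
    (Q : Fin n → ℝ → ℂ) (hQ : ∀ s (x : ℝ), Q s (x + 1) = Q s x) :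
    ∀ ξ : ℝ, ∀ s : Fin n,
      ∑ l ∈ L,
          ‖(n : ℂ)⁻¹ * ∑ s' : Fin n,
              Complex.exp ((-(2 * Real.pi * (a s' : ℝ) * (ξ + (l : ℝ)) / (N : ℝ)) : ℝ) *
                Complex.I) * Q s' (ξ + (l : ℝ))‖ ^ 2 *
          ‖mask (B s) ((ξ + (l : ℝ)) / (N : ℝ))‖ ^ 2
        = (n : ℝ)⁻¹ * ∑ s' : Fin n, ‖Q s' ξ‖ ^ 2 := by
  intro ξ s
  have hNR : (N:ℝ) ≠ 0 := by
    have : (2:ℝ) ≤ (N:ℝ) := by exact_mod_cast hN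
    linarith
  have hAcard : (Finset.univ.image a).card = n := by
    rw [Finset.card_image_of_injective _ ha, Finset.card_univ, Fintype.card_fin]
  have hLcard : L.card = n * m := by rw [← (hHad s).1, hdirect s]
  have hQper : ∀ (s' : Fin n) (l : ℤ), Q s' (ξ + (l:ℝ)) = Q s' ξ := by
    intro s' l
    have hper : Function.Periodic (Q s') 1 := hQ s'
    simpa using (hper.int_mul l) ξ
  -- injectivity of the sum map
  have hinj : ∀ (s' t' : Fin n) (b b' : ℤ), b ∈ B s → b' ∈ B s →
      a s' + b = a t' + b' → s' = t' ∧ b = b' := by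
    intro s' t' b b' hb hb' heq
    have hcard : ((Finset.univ.image a ×ˢ B s).image (fun p : ℤ × ℤ => p.1 + p.2)).card
        = (Finset.univ.image a ×ˢ B s).card := by
      rw [Finset.card_product, hAcard, hBcard s]
      exact hdirect s
    have hinjOn := Finset.card_image_iff.mp hcard
    have h1 : ((a s', b) : ℤ × ℤ) ∈ (↑(Finset.univ.image a ×ˢ B s) : Set (ℤ × ℤ)) := by
      simp [Finset.mem_product, hb]
    have h2 : ((a t', b') : ℤ × ℤ) ∈ (↑(Finset.univ.image a ×ˢ B s) : Set (ℤ × ℤ)) := by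
      simp [Finset.mem_product, hb']
    have := hinjOn h1 h2 heq
    have hab : a s' = a t' ∧ b = b' := by
      constructor
      · exact congrArg Prod.fst this
      · exact congrArg Prod.snd this
    exact ⟨ha hab.1, hab.2⟩
  -- the key vanishing sum
  have key : ∀ (s' t' : Fin n) (b b' : ℤ), b ∈ B s → b' ∈ B s → ¬(s' = t' ∧ b = b') →
      ∑ l ∈ L, ee (-(2 * Real.pi * (((a s' - a t' + (b - b') : ℤ)):ℝ) * (l:ℝ) / (N:ℝ))) = 0 := by
    intro s' t' b b' hb hb' hne
    have hk0 : a s' - a t' + (b - b') ≠ 0 := by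
      intro h0
      exact hne (hinj s' t' b b' hb hb' (by omega))
    have hd1 : a s' + b ∈ sumset (Finset.univ.image a) (B s) := by
      refine Finset.mem_image.mpr ⟨(a s', b), ?_, rfl⟩
      simp [Finset.mem_product, hb]
    have hd2 : a t' + b' ∈ sumset (Finset.univ.image a) (B s) := by
      refine Finset.mem_image.mpr ⟨(a t', b'), ?_, rfl⟩
      simp [Finset.mem_product, hb']
    exact orth N hNR _ L (hHad s).2 _ hk0 _ _ hd1 hd2 (by ring)
  -- the l-sum evaluation
  have hLsum : ∀ (s' t' : Fin n) (b b' : ℤ), b ∈ B s → b' ∈ B s →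
      ∑ l ∈ L, ee (-(2 * Real.pi * (((a s' - a t' + (b - b') : ℤ)):ℝ) * ((ξ + (l:ℝ)) / (N:ℝ))))
        = if s' = t' ∧ b = b' then ((n*m : ℕ):ℂ) else 0 := by
    intro s' t' b b' hb hb'
    by_cases hd : s' = t' ∧ b = b'
    · rw [if_pos hd]
      obtain ⟨h1, h2⟩ := hd
      subst h1; subst h2
      have : ∀ l : ℤ, ee (-(2 * Real.pi * (((a s' - a s' + (b - b) : ℤ)):ℝ) * ((ξ + (l:ℝ)) / (N:ℝ)))) = 1 := by
        intro l
        rw [show (-(2 * Real.pi * (((a s' - a s' + (b - b) : ℤ)):ℝ) * ((ξ + (l:ℝ)) / (N:ℝ)))) = 0 by push_cast; ring]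
        exact ee_zero
      simp only [this, Finset.sum_const, hLcard, nsmul_eq_mul, mul_one]
    · rw [if_neg hd]
      have hsplit : ∀ l : ℤ,
          ee (-(2 * Real.pi * (((a s' - a t' + (b - b') : ℤ)):ℝ) * ((ξ + (l:ℝ)) / (N:ℝ))))
          = ee (-(2 * Real.pi * (((a s' - a t' + (b - b') : ℤ)):ℝ) * ξ / (N:ℝ))) *
            ee (-(2 * Real.pi * (((a s' - a t' + (b - b') : ℤ)):ℝ) * (l:ℝ) / (N:ℝ))) := by
        intro l
        rw [ee_mul]
        congr 1
        ring
      simp only [hsplit]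
      rw [← Finset.mul_sum, key s' t' b b' hb hb' hd, mul_zero]
  apply Complex.ofReal_injective
  simp only [ee_def]
  push_cast
  simp only [normsq_c']
  simp only [hQper]
  simp only [map_mul, map_sum, map_inv₀, Complex.conj_natCast, conj_ee, neg_neg,
    mask_mul_conj, hBcard]
  simp only [Finset.sum_product]
  simp only [Finset.mul_sum, Finset.sum_mul]
  have hnc : (n:ℂ) ≠ 0 := Nat.cast_ne_zero.mpr (by omega)
  have hmc : (m:ℂ) ≠ 0 := Nat.cast_ne_zero.mpr (by omega)
  trans (∑ b ∈ B s, ∑ b' ∈ B s, ∑ t' : Fin n, ∑ s' : Fin n,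
      ((n:ℂ)⁻¹ * (n:ℂ)⁻¹ * ((m:ℂ)⁻¹^2) * (Q s' ξ * (starRingEnd ℂ) (Q t' ξ))) *
        (if s' = t' ∧ b = b' then ((n*m : ℕ):ℂ) else 0))
  · rw [Finset.sum_comm]
    refine Finset.sum_congr rfl fun b hb => ?_
    rw [Finset.sum_comm]
    refine Finset.sum_congr rfl fun b' hb' => ?_
    rw [Finset.sum_comm]
    refine Finset.sum_congr rfl fun t' _ => ?_
    rw [Finset.sum_comm]
    refine Finset.sum_congr rfl fun s' _ => ?_
    calc ∑ l ∈ L,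
          ((n:ℂ)⁻¹ * (ee (-(2 * Real.pi * ((a s' : ℤ):ℝ) * (ξ + (l:ℝ)) / (N:ℝ))) * Q s' ξ)) *
            ((n:ℂ)⁻¹ * (ee (2 * Real.pi * ((a t' : ℤ):ℝ) * (ξ + (l:ℝ)) / (N:ℝ)) *
              (starRingEnd ℂ) (Q t' ξ))) *
            (((m:ℂ)⁻¹^2) * ee (-(2 * Real.pi * ((b:ℝ) - (b':ℝ)) * ((ξ + (l:ℝ)) / (N:ℝ)))))
        = ∑ l ∈ L,
            ((n:ℂ)⁻¹ * (n:ℂ)⁻¹ * ((m:ℂ)⁻¹^2) * (Q s' ξ * (starRingEnd ℂ) (Q t' ξ))) *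
              ee (-(2 * Real.pi * (((a s' - a t' + (b - b') : ℤ)):ℝ) * ((ξ + (l:ℝ)) / (N:ℝ)))) := by
          refine Finset.sum_congr rfl fun l _ => ?_
          rw [show (-(2 * Real.pi * (((a s' - a t' + (b - b') : ℤ)):ℝ) * ((ξ + (l:ℝ)) / (N:ℝ))))
              = (-(2 * Real.pi * ((a s' : ℤ):ℝ) * (ξ + (l:ℝ)) / (N:ℝ)))
                + ((2 * Real.pi * ((a t' : ℤ):ℝ) * (ξ + (l:ℝ)) / (N:ℝ))
                  + (-(2 * Real.pi * ((b:ℝ) - (b':ℝ)) * ((ξ + (l:ℝ)) / (N:ℝ)))))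
              from by push_cast; ring, ee_add, ee_add]
          ring
      _ = ((n:ℂ)⁻¹ * (n:ℂ)⁻¹ * ((m:ℂ)⁻¹^2) * (Q s' ξ * (starRingEnd ℂ) (Q t' ξ))) *
            (if s' = t' ∧ b = b' then ((n*m : ℕ):ℂ) else 0) := by
          rw [← Finset.mul_sum, hLsum s' t' b b' hb hb']
  · simp only [mul_ite, mul_zero, ite_and, Finset.sum_ite_eq', Finset.mem_univ, if_true]
    have hstep : ∀ b ∈ B s,
        (∑ b' ∈ B s, ∑ t' : Fin n,
          if b = b' then (n:ℂ)⁻¹ * (n:ℂ)⁻¹ * (m:ℂ)⁻¹^2 *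
            (Q t' ξ * (starRingEnd ℂ) (Q t' ξ)) * ((n*m:ℕ):ℂ) else 0)
        = ∑ t' : Fin n, (n:ℂ)⁻¹ * (n:ℂ)⁻¹ * (m:ℂ)⁻¹^2 *
            (Q t' ξ * (starRingEnd ℂ) (Q t' ξ)) * ((n*m:ℕ):ℂ) := by
      intro b hb
      rw [Finset.sum_comm]
      refine Finset.sum_congr rfl fun t' _ => ?_
      rw [Finset.sum_ite_eq, if_pos hb]
    calc (∑ b ∈ B s, ∑ b' ∈ B s, ∑ t' : Fin n,
          if b = b' then (n:ℂ)⁻¹ * (n:ℂ)⁻¹ * (m:ℂ)⁻¹^2 *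
            (Q t' ξ * (starRingEnd ℂ) (Q t' ξ)) * ((n*m:ℕ):ℂ) else 0)
        = ∑ b ∈ B s, ∑ t' : Fin n, (n:ℂ)⁻¹ * (n:ℂ)⁻¹ * (m:ℂ)⁻¹^2 *
            (Q t' ξ * (starRingEnd ℂ) (Q t' ξ)) * ((n*m:ℕ):ℂ) :=
          Finset.sum_congr rfl hstep
      _ = ((B s).card : ℕ) • ∑ t' : Fin n, (n:ℂ)⁻¹ * (n:ℂ)⁻¹ * (m:ℂ)⁻¹^2 *
            (Q t' ξ * (starRingEnd ℂ) (Q t' ξ)) * ((n*m:ℕ):ℂ) := Finset.sum_const _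
      _ = ∑ i : Fin n, (↑n)⁻¹ * (Q i ξ * (starRingEnd ℂ) (Q i ξ)) := by
          rw [hBcard, nsmul_eq_mul, Finset.mul_sum]
          refine Finset.sum_congr rfl fun t' _ => ?_
          push_cast
          field_simp
end

section
/- Let N ≥ 2, k ≥ 1, and suppose A = A^{(k)} is generated by A^{(0)} = C₀ and A^{(j)} = ⋃_{a∈A^{(j−1)}} (a + N^j · C_j(a)) for j = 1,…,k, where (N, C₀, L̃₀) is a Hadamard triple and (N, C_j(a), L̃_j) is a Hadamard triple for each j and each a ∈ A^{(j−1)}. Then for each 0 ≤ n ≤ k, the set ⊕_{m=0}^{n} L̃_m / N^{m+1} is a spectrum for the uniform discrete measure δ_{A^{(n)}}; in particular (N^k, A, ⊕_{m=0}^{k} N^{k−m−1} L̃_m) is a Hadamard triple. -/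
open Complex Finset

noncomputable def E (t : ℝ) : ℂ := Complex.exp ((-(2 * Real.pi * t) : ℝ) * Complex.I)

lemma E_add (s t : ℝ) : E (s + t) = E s * E t := by
  unfold E; rw [← Complex.exp_add]; congr 1; push_cast; ring

lemma E_zero : E 0 = 1 := by simp [E]

lemma E_int (n : ℤ) : E n = 1 := by
  unfold E
  have := Complex.exp_int_mul_two_pi_mul_I (-n)
  rw [← this]; congr 1; push_cast; ring

lemma E_nat_pow (j : ℕ) (t : ℝ) : E (j * t) = E t ^ j := by
  unfold E; rw [← Complex.exp_nat_mul]; congr 1; push_cast; ring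

lemma conj_E (t : ℝ) : (starRingEnd ℂ) (E t) = E (-t) := by
  unfold E
  rw [← Complex.exp_conj, map_mul, Complex.conj_I, Complex.conj_ofReal]
  congr 1; push_cast; ring

lemma norm_E (t : ℝ) : ‖E t‖ = 1 := by
  unfold E
  rw [Complex.norm_exp]
  simp

lemma E_sum {ι : Type*} (s : Finset ι) (f : ι → ℝ) : E (∑ i ∈ s, f i) = ∏ i ∈ s, E (f i) := by
  classical
  induction s using Finset.cons_induction with
  | empty => simp [E_zero]
  | cons a s ha ih => rw [Finset.sum_cons, Finset.prod_cons, E_add, ih]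

lemma E_eq_one_iff (t : ℝ) : E t = 1 ↔ ∃ n : ℤ, t = n := by
  unfold E
  rw [Complex.exp_eq_one_iff]
  constructor
  · rintro ⟨n, hn⟩
    refine ⟨-n, ?_⟩
    have hn' : ((-(2 * Real.pi * t) : ℝ) : ℂ) * Complex.I = (((n : ℝ) * (2 * Real.pi) : ℝ) : ℂ) * Complex.I := by
      rw [hn]; push_cast; ring
    have h2 := mul_right_cancel₀ Complex.I_ne_zero hn'
    have h3 : -(2 * Real.pi * t) = (n : ℝ) * (2 * Real.pi) := Complex.ofReal_inj.mp h2
    have h2pi : (2:ℝ) * Real.pi ≠ 0 := by positivity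
    have h4 : (2 * Real.pi) * (t + (n:ℝ)) = 0 := by linarith
    have h5 := (mul_eq_zero.mp h4).resolve_left h2pi
    push_cast
    linarith
  · rintro ⟨n, hn⟩
    exact ⟨-n, by rw [hn]; push_cast; ring⟩

lemma mask_eq_s9 (A : Finset ℤ) (x : ℝ) : mask A x = (A.card : ℂ)⁻¹ * ∑ a ∈ A, E ((a : ℝ) * x) := by
  unfold mask E
  congr 1
  refine Finset.sum_congr rfl fun a _ => ?_
  congr 2
  ring

lemma normsq_cast (z : ℂ) : ((‖z‖ ^ 2 : ℝ) : ℂ) = z * (starRingEnd ℂ) z := by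
  rw [Complex.mul_conj, Complex.normSq_eq_norm_sq]

lemma spectrum_of_orth {γ : Type*} (A : Finset ℤ) (hA : A.Nonempty)
    (G : Finset γ) (lam : γ → ℝ) (hcard : G.card = A.card)
    (horth : ∀ a ∈ A, ∀ b ∈ A, a ≠ b → ∑ g ∈ G, E (((a - b : ℤ) : ℝ) * lam g) = 0)
    (ξ : ℝ) : ∑ g ∈ G, ‖mask A (ξ + lam g)‖ ^ 2 = 1 := by
  have hAc : ((A.card : ℂ)) ≠ 0 := by
    exact_mod_cast Nat.cast_ne_zero.mpr (Finset.card_ne_zero_of_mem hA.choose_spec)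
  have key : ∀ g : γ, ((‖mask A (ξ + lam g)‖ ^ 2 : ℝ) : ℂ)
      = (A.card : ℂ)⁻¹ * (A.card : ℂ)⁻¹ *
        ∑ a ∈ A, ∑ b ∈ A, E (((a - b : ℤ) : ℝ) * ξ) * E (((a - b : ℤ) : ℝ) * lam g) := by
    intro g
    rw [normsq_cast, mask_eq_s9]
    rw [map_mul, map_sum]
    have hconj : ((starRingEnd ℂ) ((A.card : ℂ))⁻¹) = (A.card : ℂ)⁻¹ := by
      simp
    rw [hconj]
    rw [mul_mul_mul_comm]
    congr 1
    rw [Finset.sum_mul_sum]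
    refine Finset.sum_congr rfl fun a _ => Finset.sum_congr rfl fun b _ => ?_
    rw [conj_E, ← E_add, ← E_add]
    congr 1
    push_cast; ring
  have main : ((∑ g ∈ G, ‖mask A (ξ + lam g)‖ ^ 2 : ℝ) : ℂ) = 1 := by
    push_cast
    calc (∑ g ∈ G, ((‖mask A (ξ + lam g)‖:ℂ) ^ 2))
        = ∑ g ∈ G, ((‖mask A (ξ + lam g)‖ ^ 2 : ℝ) : ℂ) := by push_cast; rfl
      _ = ∑ g ∈ G, (A.card : ℂ)⁻¹ * (A.card : ℂ)⁻¹ *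
            ∑ a ∈ A, ∑ b ∈ A, E (((a - b : ℤ) : ℝ) * ξ) * E (((a - b : ℤ) : ℝ) * lam g) := by
          exact Finset.sum_congr rfl fun g _ => key g
      _ = (A.card : ℂ)⁻¹ * (A.card : ℂ)⁻¹ *
            ∑ a ∈ A, ∑ b ∈ A, E (((a - b : ℤ) : ℝ) * ξ) * ∑ g ∈ G, E (((a - b : ℤ) : ℝ) * lam g) := by
          rw [← Finset.mul_sum]
          congr 1
          rw [Finset.sum_comm]
          refine Finset.sum_congr rfl fun a _ => ?_
          rw [Finset.sum_comm]
          refine Finset.sum_congr rfl fun b _ => ?_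
          rw [Finset.mul_sum]
      _ = (A.card : ℂ)⁻¹ * (A.card : ℂ)⁻¹ * (A.card * G.card) := by
          congr 1
          have : ∀ a ∈ A, (∑ b ∈ A, E (((a - b : ℤ) : ℝ) * ξ) * ∑ g ∈ G, E (((a - b : ℤ) : ℝ) * lam g)) = (G.card : ℂ) := by
            intro a ha
            rw [Finset.sum_eq_single_of_mem a ha]
            · simp [E_zero]
            · intro b hb hne
              rw [horth a ha b hb (by omega), mul_zero]
          rw [Finset.sum_congr rfl this]
          simp [mul_comm]
      _ = 1 := by
          rw [hcard]
          field_simp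
  exact_mod_cast main

lemma mask_sq_expand (A : Finset ℤ) (x : ℝ) :
    ((‖mask A x‖ ^ 2 : ℝ) : ℂ)
      = (A.card : ℂ)⁻¹ * (A.card : ℂ)⁻¹ * ∑ a ∈ A, ∑ b ∈ A, E (((a - b : ℤ) : ℝ) * x) := by
  rw [normsq_cast, mask_eq_s9, map_mul, map_sum]
  have hconj : ((starRingEnd ℂ) ((A.card : ℂ))⁻¹) = (A.card : ℂ)⁻¹ := by simp
  rw [hconj, mul_mul_mul_comm]
  congr 1
  rw [Finset.sum_mul_sum]
  refine Finset.sum_congr rfl fun a _ => Finset.sum_congr rfl fun b _ => ?_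
  rw [conj_E, ← E_add]
  congr 1
  push_cast; ring

lemma hadamard_nonempty {N : ℤ} {D L : Finset ℤ} (h : IsHadamardTriple N D L) :
    D.Nonempty ∧ L.Nonempty := by
  obtain ⟨hcard, hspec⟩ := h
  have hL : L.Nonempty := by
    rcases L.eq_empty_or_nonempty with h | h
    · exfalso; have := hspec 0; rw [h] at this; simp at this
    · exact h
  refine ⟨?_, hL⟩
  rw [← Finset.card_pos, hcard, Finset.card_pos]
  exact hL

/-- The geometric-sum vanishing lemma. -/
lemma geom_vanish (M : ℕ) (hM : M ≠ 0) (t : ℤ) (ht : ¬ ((M : ℤ) ∣ t)) :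
    ∑ j ∈ Finset.range M, E ((t : ℝ) * j / M) = 0 := by
  have hM0 : (M : ℝ) ≠ 0 := Nat.cast_ne_zero.mpr hM
  have hterm : ∀ j : ℕ, E ((t : ℝ) * j / M) = E ((t : ℝ) / M) ^ j := by
    intro j
    rw [← E_nat_pow]
    congr 1; ring
  have hz1 : E ((t : ℝ) / M) ≠ 1 := by
    intro hz
    obtain ⟨n, hn⟩ := (E_eq_one_iff _).mp hz
    apply ht
    refine ⟨n, ?_⟩
    have : (t : ℝ) = M * n := by field_simp at hn; linarith
    exact_mod_cast this
  have hzM : E ((t : ℝ) / M) ^ M = 1 := by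
    rw [← E_nat_pow]
    have : (M : ℝ) * ((t : ℝ) / M) = ((t : ℤ) : ℝ) := by field_simp
    rw [this, E_int]
  calc ∑ j ∈ Finset.range M, E ((t : ℝ) * j / M)
      = ∑ j ∈ Finset.range M, E ((t : ℝ) / M) ^ j := Finset.sum_congr rfl fun j _ => hterm j
    _ = (E ((t : ℝ) / M) ^ M - 1) / (E ((t : ℝ) / M) - 1) := geom_sum_eq hz1 M
    _ = 0 := by rw [hzM]; simp

lemma hadamard_orth {N : ℤ} {D L : Finset ℤ} (hN0 : (N : ℝ) ≠ 0)
    (h : IsHadamardTriple N D L) :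
    ∀ d ∈ D, ∀ d' ∈ D, d ≠ d' → ∑ l ∈ L, E (((d - d' : ℤ) : ℝ) * l / (N : ℝ)) = 0 := by
  obtain ⟨hD, hL⟩ := hadamard_nonempty h
  obtain ⟨hcard, hspec⟩ := h
  have hDc : ((D.card : ℂ)) ≠ 0 := Nat.cast_ne_zero.mpr (Finset.card_ne_zero_of_mem hD.choose_spec)
  set w : ℤ → ℂ := fun kk => ∑ l ∈ L, E ((kk : ℝ) * l / N) with hw
  -- Step 1: the expanded spectral equation
  have eqn : ∀ ξ : ℝ, ∑ a ∈ D, ∑ b ∈ D, E (((a - b : ℤ) : ℝ) * ξ / N) * w (a - b)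
      = (D.card : ℂ) * (D.card : ℂ) := by
    intro ξ
    have h1 : ((∑ l ∈ L, ‖mask D ((ξ + (l : ℝ)) / N)‖ ^ 2 : ℝ) : ℂ) = 1 := by
      rw [hspec ξ]; norm_num
    rw [Complex.ofReal_sum] at h1
    have h2 : ∀ l ∈ L, ((‖mask D ((ξ + (l : ℝ)) / N)‖ ^ 2 : ℝ) : ℂ)
        = (D.card : ℂ)⁻¹ * (D.card : ℂ)⁻¹ *
          ∑ a ∈ D, ∑ b ∈ D, E (((a - b : ℤ) : ℝ) * ξ / N) * E (((a - b : ℤ) : ℝ) * l / N) := by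
      intro l _
      rw [mask_sq_expand]
      congr 1
      refine Finset.sum_congr rfl fun a _ => Finset.sum_congr rfl fun b _ => ?_
      rw [← E_add]
      congr 1
      field_simp
    rw [Finset.sum_congr rfl h2, ← Finset.mul_sum] at h1
    have h3 : ∑ l ∈ L, ∑ a ∈ D, ∑ b ∈ D,
          E (((a - b : ℤ) : ℝ) * ξ / N) * E (((a - b : ℤ) : ℝ) * l / N)
        = ∑ a ∈ D, ∑ b ∈ D, E (((a - b : ℤ) : ℝ) * ξ / N) * w (a - b) := by
      rw [Finset.sum_comm]
      refine Finset.sum_congr rfl fun a _ => ?_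
      rw [Finset.sum_comm]
      refine Finset.sum_congr rfl fun b _ => ?_
      rw [Finset.mul_sum]
    rw [h3] at h1
    field_simp at h1
    push_cast
    simpa [sq] using h1
  intro d hd d' hd' hne
  classical
  set B : ℕ := ∑ x ∈ D, x.natAbs with hB
  have habs : ∀ a ∈ D, a.natAbs ≤ B := fun a ha =>
    Finset.single_le_sum (f := fun x => x.natAbs) (fun x _ => Nat.zero_le _) ha
  have hdiff : ∀ a ∈ D, ∀ b ∈ D, (a - b).natAbs ≤ 2 * B := by
    intro a ha b hb
    calc (a - b).natAbs ≤ a.natAbs + b.natAbs := Int.natAbs_sub_le a b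
      _ ≤ 2 * B := by have := habs a ha; have := habs b hb; omega
  set M : ℕ := 4 * B + 1 with hM
  have hMne : M ≠ 0 := by omega
  have hM0 : (M : ℝ) ≠ 0 := Nat.cast_ne_zero.mpr hMne
  have hnd : ∀ t : ℤ, t ≠ 0 → t.natAbs ≤ 4 * B → ¬ ((M : ℤ) ∣ t) := by
    intro t ht hle hdvd
    have h1 : ((M : ℤ)).natAbs ∣ t.natAbs := Int.natAbs_dvd_natAbs.mpr hdvd
    simp only [Int.natAbs_natCast] at h1
    have := Nat.le_of_dvd (Nat.pos_of_ne_zero fun h => ht (Int.natAbs_eq_zero.mp h)) h1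
    omega
  set T : ℂ := ∑ j ∈ Finset.range M, E (((d' - d : ℤ) : ℝ) * j / M) *
      (∑ a ∈ D, ∑ b ∈ D, E (((a - b : ℤ) : ℝ) * j / M) * w (a - b)) with hT
  have hTzero : T = 0 := by
    have hinner : ∀ j : ℕ, (∑ a ∈ D, ∑ b ∈ D, E (((a - b : ℤ) : ℝ) * j / M) * w (a - b))
        = (D.card : ℂ) * (D.card : ℂ) := by
      intro j
      have := eqn ((j : ℝ) * N / M)
      rw [← this]
      refine Finset.sum_congr rfl fun a _ => Finset.sum_congr rfl fun b _ => ?_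
      congr 2
      field_simp
    rw [hT, Finset.sum_congr rfl fun j _ => by rw [hinner j]]
    rw [← Finset.sum_mul]
    rw [geom_vanish M hMne (d' - d) ?_, zero_mul]
    exact hnd _ (sub_ne_zero.mpr (Ne.symm hne)) (by have := hdiff d' hd' d hd; omega)
  have hTalt : T = ∑ a ∈ D, ∑ b ∈ D,
      (if a - b = d - d' then w (d - d') * M else 0) := by
    have hcomb : ∀ (a b : ℤ) (j : ℕ),
        E (((d' - d : ℤ) : ℝ) * j / M) * (E (((a - b : ℤ) : ℝ) * j / M) * w (a - b))
        = w (a - b) * E (((a - b - (d - d') : ℤ) : ℝ) * j / M) := by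
      intro a b j
      rw [← mul_assoc, ← E_add, mul_comm]
      congr 1
      push_cast
      ring
    have hper : ∀ a ∈ D, ∀ b ∈ D, (∑ j ∈ Finset.range M, w (a - b) * E (((a - b - (d - d') : ℤ) : ℝ) * j / M))
        = (if a - b = d - d' then w (d - d') * M else 0) := by
      intro a ha b hb
      rw [← Finset.mul_sum]
      by_cases hab : a - b = d - d'
      · rw [if_pos hab, hab]
        have h1 : ∀ j ∈ Finset.range M, E (((d - d' - (d - d') : ℤ) : ℝ) * j / M) = 1 := by
          intro j _; simp [E_zero]
        rw [Finset.sum_congr rfl h1]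
        simp [mul_comm]
      · rw [if_neg hab]
        rw [geom_vanish M hMne (a - b - (d - d')) ?_, mul_zero]
        refine hnd _ (by omega) ?_
        calc (a - b - (d - d')).natAbs ≤ (a - b).natAbs + (d - d').natAbs := Int.natAbs_sub_le _ _
          _ ≤ 4 * B := by have := hdiff a ha b hb; have := hdiff d hd d' hd'; omega
    calc T = ∑ j ∈ Finset.range M, ∑ a ∈ D, ∑ b ∈ D,
          E (((d' - d : ℤ) : ℝ) * j / M) * (E (((a - b : ℤ) : ℝ) * j / M) * w (a - b)) := by
            rw [hT]
            refine Finset.sum_congr rfl fun j _ => ?_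
            rw [Finset.mul_sum]
            refine Finset.sum_congr rfl fun a _ => ?_
            rw [Finset.mul_sum]
      _ = ∑ j ∈ Finset.range M, ∑ a ∈ D, ∑ b ∈ D,
          w (a - b) * E (((a - b - (d - d') : ℤ) : ℝ) * j / M) := by
            exact Finset.sum_congr rfl fun j _ => Finset.sum_congr rfl fun a _ =>
              Finset.sum_congr rfl fun b _ => hcomb a b j
      _ = ∑ a ∈ D, ∑ j ∈ Finset.range M, ∑ b ∈ D,
          w (a - b) * E (((a - b - (d - d') : ℤ) : ℝ) * j / M) := Finset.sum_comm
      _ = ∑ a ∈ D, ∑ b ∈ D, ∑ j ∈ Finset.range M,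
          w (a - b) * E (((a - b - (d - d') : ℤ) : ℝ) * j / M) := by
            exact Finset.sum_congr rfl fun a _ => Finset.sum_comm
      _ = ∑ a ∈ D, ∑ b ∈ D, (if a - b = d - d' then w (d - d') * M else 0) := by
            exact Finset.sum_congr rfl fun a ha => Finset.sum_congr rfl fun b hb => hper a ha b hb
  have hcardfilter : ((((D ×ˢ D).filter fun p => p.1 - p.2 = d - d')).card : ℂ) ≠ 0 := by
    have hmem : (d, d') ∈ (D ×ˢ D).filter fun p => p.1 - p.2 = d - d' := by
      simp [Finset.mem_filter, Finset.mem_product, hd, hd']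
    exact Nat.cast_ne_zero.mpr (Finset.card_ne_zero_of_mem hmem)
  have hfinal : (((((D ×ˢ D).filter fun p => p.1 - p.2 = d - d')).card : ℂ)) * (w (d - d') * M) = 0 := by
    have hprod : (∑ p ∈ D ×ˢ D, if p.1 - p.2 = d - d' then w (d - d') * (M : ℂ) else 0)
        = ∑ a ∈ D, ∑ b ∈ D, (if a - b = d - d' then w (d - d') * (M : ℂ) else 0) :=
      Finset.sum_product (s := D) (t := D)
        (f := fun p => if p.1 - p.2 = d - d' then w (d - d') * (M : ℂ) else 0)
    rw [← hTzero, hTalt, ← hprod, ← Finset.sum_filter, Finset.sum_const, nsmul_eq_mul]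
  have hMc : ((M : ℂ)) ≠ 0 := Nat.cast_ne_zero.mpr hMne
  have := (mul_eq_zero.mp hfinal).resolve_left hcardfilter
  have := (mul_eq_zero.mp this).resolve_right hMc
  exact this

lemma hadamard_inj {N : ℤ} (hN0 : (N : ℝ) ≠ 0) {D L : Finset ℤ} (h : IsHadamardTriple N D L) :
    ∀ d ∈ D, ∀ d' ∈ D, N ∣ d - d' → d = d' := by
  intro d hd d' hd' hdvd
  by_contra hne
  have h0 := hadamard_orth hN0 h d hd d' hd' hne
  obtain ⟨t, ht⟩ := hdvd
  have hone : ∀ l ∈ L, E (((d - d' : ℤ) : ℝ) * l / N) = 1 := by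
    intro l _
    have harg : ((d - d' : ℤ) : ℝ) * l / N = ((t * l : ℤ) : ℝ) := by
      rw [ht]; push_cast; field_simp
    rw [harg, E_int]
  rw [Finset.sum_congr rfl hone, Finset.sum_const, nsmul_eq_mul, mul_one] at h0
  exact (Nat.cast_ne_zero.mpr
    (Finset.card_ne_zero_of_mem (hadamard_nonempty h).2.choose_spec)) h0

lemma wsum_congr {N : ℤ} (hN0 : (N : ℝ) ≠ 0) (L : Finset ℤ) (e : ℕ) {δ δ' : ℤ}
    (h : N ^ e ∣ δ - δ') :
    ∑ l ∈ L, E ((δ : ℝ) * l / (N : ℝ) ^ e) = ∑ l ∈ L, E ((δ' : ℝ) * l / (N : ℝ) ^ e) := by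
  obtain ⟨t, ht⟩ := h
  have hNe : (N : ℝ) ^ e ≠ 0 := pow_ne_zero _ hN0
  refine Finset.sum_congr rfl fun l _ => ?_
  have hδ : (δ : ℝ) = (δ' : ℝ) + (N : ℝ) ^ e * (t : ℝ) := by
    have h2 : δ = N ^ e * t + δ' := sub_eq_iff_eq_add.mp ht
    rw [h2]; push_cast; ring
  have harg : (δ : ℝ) * l / (N : ℝ) ^ e = (δ' : ℝ) * l / (N : ℝ) ^ e + ((t * l : ℤ) : ℝ) := by
    rw [hδ]; push_cast; field_simp
  rw [harg, E_add, E_int, mul_one]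

theorem stmt_9 (N : ℤ) (hN : 2 ≤ N) (k : ℕ) (hk : 1 ≤ k)
    (C₀ : Finset ℤ) (C : ℕ → ℤ → Finset ℤ) (Lt : ℕ → Finset ℤ)
    (A : ℕ → Finset ℤ) (hA0 : A 0 = C₀)
    (hAj : ∀ j : ℕ, 1 ≤ j → j ≤ k →
      A j = (A (j - 1)).biUnion fun a => (C j a).image fun c => a + N ^ j * c)
    (hH0 : IsHadamardTriple N C₀ (Lt 0))
    (hHj : ∀ j : ℕ, 1 ≤ j → j ≤ k → ∀ a ∈ A (j - 1), IsHadamardTriple N (C j a) (Lt j)) :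
    (∀ n : ℕ, n ≤ k → ∀ ξ : ℝ,
      ∑ g ∈ Fintype.piFinset (fun m : Fin (n + 1) => Lt m),
        ‖mask (A n) (ξ + ∑ m : Fin (n + 1), (g m : ℝ) / (N : ℝ) ^ ((m : ℕ) + 1))‖ ^ 2 = 1) ∧
    (∀ ξ : ℝ,
      ∑ g ∈ Fintype.piFinset (fun m : Fin (k + 1) => Lt m),
        ‖mask (A k)
          ((ξ + ∑ m : Fin (k + 1), (g m : ℝ) * (N : ℝ) ^ ((k : ℤ) - (m : ℕ) - 1)) /
            (N : ℝ) ^ k)‖ ^ 2 = 1) := by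
  have hNz : N ≠ 0 := by omega
  have hN0 : (N : ℝ) ≠ 0 := Int.cast_ne_zero.mpr hNz
  -- the structural induction
  have main : ∀ n : ℕ, n ≤ k →
      (A n).Nonempty ∧
      ((A n).card = ∏ m : Fin (n + 1), (Lt m).card) ∧
      (∀ a ∈ A n, ∀ a' ∈ A n, (N ^ (n + 1) ∣ a - a') → a = a') ∧
      (∀ a ∈ A n, ∀ a' ∈ A n, a ≠ a' →
        ∃ m : Fin (n + 1),
          ∑ l ∈ Lt m, E (((a - a' : ℤ) : ℝ) * l / (N : ℝ) ^ ((m : ℕ) + 1)) = 0) := by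
    intro n
    induction n with
    | zero =>
      intro _
      refine ⟨?_, ?_, ?_, ?_⟩
      · rw [hA0]; exact (hadamard_nonempty hH0).1
      · rw [hA0, Fin.prod_univ_one]; exact hH0.1
      · intro a ha a' ha' hdvd
        rw [hA0] at ha ha'
        exact hadamard_inj hN0 hH0 a ha a' ha' (by rwa [pow_one] at hdvd)
      · intro a ha a' ha' hne
        rw [hA0] at ha ha'
        refine ⟨0, ?_⟩
        have := hadamard_orth hN0 hH0 a ha a' ha' hne
        simpa [pow_one] using this
    | succ n ih =>
      intro hn1
      obtain ⟨hne, hcard, hdiv, horth⟩ := ih (by omega)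
      have hAeq : A (n + 1)
          = (A n).biUnion fun a => (C (n + 1) a).image fun c => a + N ^ (n + 1) * c := by
        have := hAj (n + 1) (by omega) hn1
        simpa using this
      have hH : ∀ a ∈ A n, IsHadamardTriple N (C (n + 1) a) (Lt (n + 1)) := by
        intro a ha
        have := hHj (n + 1) (by omega) hn1 a (by simpa using ha)
        exact this
      have hmem : ∀ x : ℤ, x ∈ A (n + 1) ↔
          ∃ b ∈ A n, ∃ c ∈ C (n + 1) b, x = b + N ^ (n + 1) * c := by
        intro x
        rw [hAeq]
        simp only [Finset.mem_biUnion, Finset.mem_image]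
        constructor
        · rintro ⟨b, hb, c, hc, rfl⟩
          exact ⟨b, hb, c, hc, rfl⟩
        · rintro ⟨b, hb, c, hc, rfl⟩
          exact ⟨b, hb, c, hc, rfl⟩
      have hNpow : (N : ℤ) ^ (n + 1) ≠ 0 := pow_ne_zero _ hNz
      refine ⟨?_, ?_, ?_, ?_⟩
      · obtain ⟨b, hb⟩ := hne
        obtain ⟨c, hc⟩ := (hadamard_nonempty (hH b hb)).1
        exact ⟨b + N ^ (n + 1) * c, (hmem _).mpr ⟨b, hb, c, hc, rfl⟩⟩
      · rw [hAeq, Finset.card_biUnion]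
        · have himg : ∀ b ∈ A n,
              ((C (n + 1) b).image fun c => b + N ^ (n + 1) * c).card = (Lt (n + 1)).card := by
            intro b hb
            rw [Finset.card_image_of_injective _ ?_, (hH b hb).1]
            intro c c' hcc
            have := add_left_cancel hcc
            exact mul_left_cancel₀ hNpow this
          rw [Finset.sum_congr rfl himg, Finset.sum_const, smul_eq_mul, hcard,
            Fin.prod_univ_castSucc (f := fun m : Fin (n + 1 + 1) => (Lt (m : ℕ)).card)]
          simp [mul_comm]
        · intro b hb b' hb' hbb
          rw [Function.onFun, Finset.disjoint_left]
          rintro x hx hx'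
          simp only [Finset.mem_image] at hx hx'
          obtain ⟨c, hc, rfl⟩ := hx
          obtain ⟨c', hc', heq⟩ := hx'
          apply hbb
          apply hdiv b hb b' hb'
          refine ⟨c' - c, ?_⟩
          linarith [heq]
      · intro a ha a' ha' hdvd
        obtain ⟨b, hb, c, hc, rfl⟩ := (hmem a).mp ha
        obtain ⟨b', hb', c', hc', rfl⟩ := (hmem a').mp ha'
        have hsub : b + N ^ (n + 1) * c - (b' + N ^ (n + 1) * c')
            = (b - b') + N ^ (n + 1) * (c - c') := by ring
        have hd1 : N ^ (n + 1) ∣ b - b' := by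
          have h1 : N ^ (n + 1) ∣ b + N ^ (n + 1) * c - (b' + N ^ (n + 1) * c') :=
            dvd_trans (pow_dvd_pow N (by omega)) hdvd
          rw [hsub] at h1
          have hrw : b - b' = (b - b' + N ^ (n + 1) * (c - c')) - N ^ (n + 1) * (c - c') := by
            ring
          rw [hrw]
          exact dvd_sub h1 (dvd_mul_right _ _)
        have hbb : b = b' := hdiv b hb b' hb' hd1
        subst hbb
        have h2 : N ^ (n + 1 + 1) ∣ N ^ (n + 1) * (c - c') := by
          have := hdvd
          rw [hsub] at this
          simpa using this
        have h3 : N ∣ c - c' := by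
          obtain ⟨t, ht⟩ := h2
          refine ⟨t, ?_⟩
          have hh : N ^ (n + 1) * (c - c') = N ^ (n + 1) * (N * t) := by
            rw [ht]; ring
          exact mul_left_cancel₀ hNpow hh
        have := hadamard_inj hN0 (hH b hb) c hc c' hc' h3
        rw [this]
      · intro a ha a' ha' hnea
        obtain ⟨b, hb, c, hc, rfl⟩ := (hmem a).mp ha
        obtain ⟨b', hb', c', hc', rfl⟩ := (hmem a').mp ha'
        by_cases hbb : b = b'
        · subst hbb
          have hcc : c ≠ c' := fun h => hnea (by rw [h])
          refine ⟨Fin.last (n + 1), ?_⟩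
          have hz := hadamard_orth hN0 (hH b hb) c hc c' hc' hcc
          simp only [Fin.val_last]
          have harg : ∀ l : ℤ,
              ((b + N ^ (n + 1) * c - (b + N ^ (n + 1) * c') : ℤ) : ℝ) * l
                / (N : ℝ) ^ (n + 1 + 1)
              = ((c - c' : ℤ) : ℝ) * l / (N : ℝ) := by
            intro l
            push_cast
            field_simp
            ring
          rw [Finset.sum_congr rfl fun l _ => congrArg E (harg l)]
          exact hz
        · obtain ⟨m, hm⟩ := horth b hb b' hb' hbb
          refine ⟨m.castSucc, ?_⟩
          have hv : ((m.castSucc : ℕ)) = (m : ℕ) := rfl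
          rw [hv]
          have hdd : N ^ ((m : ℕ) + 1) ∣
              (b + N ^ (n + 1) * c - (b' + N ^ (n + 1) * c')) - (b - b') := by
            have h4 : (b + N ^ (n + 1) * c - (b' + N ^ (n + 1) * c')) - (b - b')
                = N ^ (n + 1) * (c - c') := by ring
            rw [h4]
            exact dvd_mul_of_dvd_left (pow_dvd_pow N (by omega : (m : ℕ) + 1 ≤ n + 1)) _
          rw [wsum_congr hN0 (Lt m) ((m : ℕ) + 1) hdd]
          exact hm
  constructor
  · intro n hn ξ
    obtain ⟨hne, hcard, _, horth⟩ := main n hn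
    refine spectrum_of_orth (A n) hne _ _ ?_ ?_ ξ
    · rw [Fintype.card_piFinset, hcard]
    · intro a ha b hbm hnab
      obtain ⟨m, hm⟩ := horth a ha b hbm hnab
      have hfact : ∀ g ∈ Fintype.piFinset (fun m : Fin (n + 1) => Lt m),
          E (((a - b : ℤ) : ℝ) * ∑ m : Fin (n + 1), (g m : ℝ) / (N : ℝ) ^ ((m : ℕ) + 1))
          = ∏ m : Fin (n + 1), E (((a - b : ℤ) : ℝ) * (g m : ℝ) / (N : ℝ) ^ ((m : ℕ) + 1)) := by
        intro g _
        rw [Finset.mul_sum, E_sum]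
        exact Finset.prod_congr rfl fun m _ => by rw [mul_div_assoc]
      rw [Finset.sum_congr rfl hfact,
        ← Finset.prod_univ_sum (t := fun m : Fin (n + 1) => Lt (m : ℕ))
          (f := fun (m : Fin (n + 1)) (l : ℤ) =>
            E (((a - b : ℤ) : ℝ) * (l : ℝ) / (N : ℝ) ^ ((m : ℕ) + 1)))]
      exact Finset.prod_eq_zero (Finset.mem_univ m) hm
  · intro ξ
    have h2 := (main k le_rfl)
    have h1 : ∑ g ∈ Fintype.piFinset (fun m : Fin (k + 1) => Lt m),
        ‖mask (A k) (ξ / (N : ℝ) ^ k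
          + ∑ m : Fin (k + 1), (g m : ℝ) / (N : ℝ) ^ ((m : ℕ) + 1))‖ ^ 2 = 1 := by
      obtain ⟨hne, hcard, _, horth⟩ := h2
      refine spectrum_of_orth (A k) hne _ _ ?_ ?_ _
      · rw [Fintype.card_piFinset, hcard]
      · intro a ha b hbm hnab
        obtain ⟨m, hm⟩ := horth a ha b hbm hnab
        have hfact : ∀ g ∈ Fintype.piFinset (fun m : Fin (k + 1) => Lt m),
            E (((a - b : ℤ) : ℝ) * ∑ m : Fin (k + 1), (g m : ℝ) / (N : ℝ) ^ ((m : ℕ) + 1))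
            = ∏ m : Fin (k + 1), E (((a - b : ℤ) : ℝ) * (g m : ℝ) / (N : ℝ) ^ ((m : ℕ) + 1)) := by
          intro g _
          rw [Finset.mul_sum, E_sum]
          exact Finset.prod_congr rfl fun m _ => by rw [mul_div_assoc]
        rw [Finset.sum_congr rfl hfact,
          ← Finset.prod_univ_sum (t := fun m : Fin (k + 1) => Lt (m : ℕ))
            (f := fun (m : Fin (k + 1)) (l : ℤ) =>
              E (((a - b : ℤ) : ℝ) * (l : ℝ) / (N : ℝ) ^ ((m : ℕ) + 1)))]
        exact Finset.prod_eq_zero (Finset.mem_univ m) hm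
    rw [← h1]
    refine Finset.sum_congr rfl fun g _ => ?_
    have harg : (ξ + ∑ m : Fin (k + 1), (g m : ℝ) * (N : ℝ) ^ ((k : ℤ) - (m : ℕ) - 1))
          / (N : ℝ) ^ k
        = ξ / (N : ℝ) ^ k + ∑ m : Fin (k + 1), (g m : ℝ) / (N : ℝ) ^ ((m : ℕ) + 1) := by
      rw [add_div, Finset.sum_div]
      congr 1
      refine Finset.sum_congr rfl fun m _ => ?_
      have hzp : (N : ℝ) ^ ((k : ℤ) - (m : ℕ) - 1)
          = (N : ℝ) ^ (k : ℤ) * ((N : ℝ) ^ (((m : ℕ) : ℤ) + 1))⁻¹ := by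
        rw [← zpow_neg, ← zpow_add₀ hN0]
        congr 1
        ring
      rw [hzp]
      rw [show ((N : ℝ) ^ (k : ℤ)) = (N : ℝ) ^ k from zpow_natCast _ _]
      rw [show ((N : ℝ) ^ (((m : ℕ) : ℤ) + 1)) = (N : ℝ) ^ ((m : ℕ) + 1) by
        rw [← zpow_natCast (N : ℝ) ((m : ℕ) + 1)]; congr 1]
      have hpk : (N : ℝ) ^ k ≠ 0 := pow_ne_zero _ hN0
      field_simp
    rw [harg]
end
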